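/- arXiv:2306.12937 — 8 statements merged into one kernel-verified Lean document; each statement's English description precedes it below -/
import Mathlib

section
/- Every Malcev algebra (L,⟨·,·⟩) becomes a Lie-Yamaguti algebra with binary bracket [x,y] := ⟨x,y⟩ and ternary bracket {x,y,z} := ⟨x,⟨y,z⟩⟩ - ⟨y,⟨x,z⟩⟩ + ⟨⟨x,y⟩,z⟩. -/
/-- A Lie-Yamaguti algebra structure on a `K`-module `L`: a bilinear bracket `br`
and a trilinear bracket `tr` satisfying axioms (LY1)-(LY6). -/
structure LYStruct (K L : Type*) [Field K] [AddCommGroup L] [Module K L] where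
  br : L →ₗ[K] L →ₗ[K] L
  tr : L →ₗ[K] L →ₗ[K] L →ₗ[K] L
  ly1 : ∀ a b, br a b = - br b a
  ly2 : ∀ a b c, tr a b c = - tr b a c
  ly3 : ∀ a b c,
    br (br a b) c + tr a b c + br (br b c) a + tr b c a + br (br c a) b + tr c a b = 0
  ly4 : ∀ a b c x, tr (br a b) c x + tr (br b c) a x + tr (br c a) b x = 0
  ly5 : ∀ a b x y, tr a b (br x y) = br (tr a b x) y + br x (tr a b y)
  ly6 : ∀ a b x y z,
    tr a b (tr x y z) = tr (tr a b x) y z + tr x (tr a b y) z + tr x y (tr a b z)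

set_option maxHeartbeats 4000000 in
/-- Every Malcev algebra becomes a Lie-Yamaguti algebra with `[x,y] := ⟨x,y⟩` and
`{x,y,z} := ⟨x,⟨y,z⟩⟩ - ⟨y,⟨x,z⟩⟩ + ⟨⟨x,y⟩,z⟩`. -/
theorem stmt1 (K L : Type*) [Field K] [CharZero K] [AddCommGroup L] [Module K L]
    (m : L →ₗ[K] L →ₗ[K] L)
    (hanti : ∀ x y, m x y = - m y x)
    (hmalcev : ∀ x y z, m (m x y) (m x z)
      = m (m (m x y) z) x + m (m (m y z) x) x + m (m (m z x) x) y) :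
    ∃ S : LYStruct K L, (∀ x y, S.br x y = m x y) ∧
      (∀ x y z, S.tr x y z = m x (m y z) - m y (m x z) + m (m x y) z) := by
  -- the trilinear bracket as a bundled trilinear map
  set T : L →ₗ[K] L →ₗ[K] L →ₗ[K] L := LinearMap.mk₂ K
      (fun a b => m a ∘ₗ m b - m b ∘ₗ m a + m (m a b))
      (fun a a' b => by
        ext z
        simp only [map_add, LinearMap.add_apply, LinearMap.sub_apply, LinearMap.comp_apply]
        abel)
      (fun c a b => by
        ext z
        simp only [map_smul, LinearMap.smul_apply, LinearMap.sub_apply, LinearMap.add_apply,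
          LinearMap.comp_apply]
        module)
      (fun a b b' => by
        ext z
        simp only [map_add, LinearMap.add_apply, LinearMap.sub_apply, LinearMap.comp_apply]
        abel)
      (fun c a b => by
        ext z
        simp only [map_smul, LinearMap.smul_apply, LinearMap.sub_apply, LinearMap.add_apply,
          LinearMap.comp_apply]
        module)
    with hTdef
  have hT : ∀ a b c : L, T a b c = m a (m b c) - m b (m a c) + m (m a b) c := by
    intro a b c
    simp [hTdef, LinearMap.mk₂_apply, LinearMap.sub_apply, LinearMap.add_apply,
      LinearMap.comp_apply]
  -- the fully linearized Malcev identity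
  have hml : ∀ w x y z : L,
      m (m w y) (m x z) + m (m x y) (m w z)
        = m (m (m w y) z) x + m (m (m x y) z) w + m (m (m y z) w) x
          + m (m (m y z) x) w + m (m (m z w) x) y + m (m (m z x) w) y := by
    intro w x y z
    have h := hmalcev (w + x) y z
    simp only [map_add, LinearMap.add_apply] at h
    linear_combination (norm := module) h - hmalcev w y z - hmalcev x y z
  -- LY5: D = T a b is a derivation of m
  have h5' : ∀ a b x y : L, T a b (m x y) = m (T a b x) y + m x (T a b y) := by
    intro a b x y
    rw [hT a b (m x y), hT a b x, hT a b y]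
    simp only [map_add, map_sub, LinearMap.add_apply, LinearMap.sub_apply]
    have hc5_0 : m (m a (m b x)) y = -(m y (m a (m b x))) := by rw [hanti (m a (m b x)) y]; try simp
    have hc5_1 : m (m b (m a x)) y = -(m y (m b (m a x))) := by rw [hanti (m b (m a x)) y]; try simp
    have hc5_2 : m (m (m a b) x) y = -(m (m x (m a b)) y) := by rw [hanti (m a b) x]; try simp
    have hc5_3 : m x (m (m a b) y) = -(m x (m y (m a b))) := by rw [hanti (m a b) y]; try simp
    have hc5_4 : m (m b x) (m a y) = -(m (m a y) (m b x)) := by rw [hanti (m b x) (m a y)]; try simp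
    have hc5_5 : m (m (m a x) y) b = -(m (m y (m a x)) b) := by rw [hanti (m a x) y]; try simp
    have hc5_6 : m (m (m b x) y) a = -(m (m y (m b x)) a) := by rw [hanti (m b x) y]; try simp
    have hc5_7 : m (m (m x y) a) b = -(m (m a (m x y)) b) := by rw [hanti (m x y) a]; try simp
    have hc5_8 : m (m (m x y) b) a = -(m (m b (m x y)) a) := by rw [hanti (m x y) b]; try simp
    have hc5_9 : m (m (m y a) b) x = -(m (m (m a y) b) x) := by rw [hanti y a]; try simp
    have hc5_10 : m (m (m y b) a) x = -(m (m (m b y) a) x) := by rw [hanti y b]; try simp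
    have hc5_11 : m (m b y) (m a x) = -(m (m a x) (m b y)) := by rw [hanti (m b y) (m a x)]; try simp
    have hc5_12 : m (m (m a y) x) b = -(m (m x (m a y)) b) := by rw [hanti (m a y) x]; try simp
    have hc5_13 : m (m (m b y) x) a = -(m (m x (m b y)) a) := by rw [hanti (m b y) x]; try simp
    have hc5_14 : m (m (m y x) a) b = -(m (m (m x y) a) b) := by rw [hanti y x]; try simp
    have hc5_15 : m (m (m y x) b) a = -(m (m (m x y) b) a) := by rw [hanti y x]; try simp
    have hc5_16 : m (m (m x a) b) y = -(m (m (m a x) b) y) := by rw [hanti x a]; try simp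
    have hc5_17 : m (m (m x b) a) y = -(m (m (m b x) a) y) := by rw [hanti x b]; try simp
    have hc5_18 : m (m x b) (m a y) = -(m (m b x) (m a y)) := by rw [hanti x b]; try simp
    have hc5_19 : m (m (m a b) y) x = -(m (m y (m a b)) x) := by rw [hanti (m a b) y]; try simp
    have hc5_20 : m (m (m x b) y) a = -(m (m (m b x) y) a) := by rw [hanti x b]; try simp
    have hc5_21 : m (m (m b y) a) x = -(m (m a (m b y)) x) := by rw [hanti (m b y) a]; try simp
    have hc5_22 : m (m (m y a) x) b = -(m (m (m a y) x) b) := by rw [hanti y a]; try simp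
    have hc5_23 : m (m a y) (m x b) = -(m (m a y) (m b x)) := by rw [hanti x b]; try simp
    have hc5_24 : m (m x y) (m a b) = -(m (m a b) (m x y)) := by rw [hanti (m x y) (m a b)]; try simp
    have hc5_25 : m (m (m a y) b) x = -(m (m b (m a y)) x) := by rw [hanti (m a y) b]; try simp
    have hc5_26 : m (m (m y b) x) a = -(m (m (m b y) x) a) := by rw [hanti y b]; try simp
    have hc5_27 : m (m (m b a) x) y = -(m (m (m a b) x) y) := by rw [hanti b a]; try simp
    have hc5_28 : m (m (m b x) a) y = -(m (m a (m b x)) y) := by rw [hanti (m b x) a]; try simp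
    have hc5_29 : m (m a b) (m y x) = -(m (m a b) (m x y)) := by rw [hanti y x]; try simp
    have hc5_30 : m (m y b) (m a x) = -(m (m b y) (m a x)) := by rw [hanti y b]; try simp
    have hc5_31 : m (m (m x a) y) b = -(m (m (m a x) y) b) := by rw [hanti x a]; try simp
    have hc5_32 : m (m x (m a b)) y = -(m y (m x (m a b))) := by rw [hanti (m x (m a b)) y]; try simp
    have hc5_33 : m (m y (m a x)) b = -(m b (m y (m a x))) := by rw [hanti (m y (m a x)) b]; try simp
    have hc5_34 : m (m y (m b x)) a = -(m a (m y (m b x))) := by rw [hanti (m y (m b x)) a]; try simp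
    have hc5_35 : m (m a (m x y)) b = -(m b (m a (m x y))) := by rw [hanti (m a (m x y)) b]; try simp
    have hc5_36 : m (m b (m x y)) a = -(m a (m b (m x y))) := by rw [hanti (m b (m x y)) a]; try simp
    have hc5_37 : m (m x (m a y)) b = -(m b (m x (m a y))) := by rw [hanti (m x (m a y)) b]; try simp
    have hc5_38 : m (m x (m b y)) a = -(m a (m x (m b y))) := by rw [hanti (m x (m b y)) a]; try simp
    have hc5_39 : m (m (m x y) a) b = -(m (m a (m x y)) b) := by rw [hanti (m x y) a]; try simp
    have hc5_40 : m (m (m x y) b) a = -(m (m b (m x y)) a) := by rw [hanti (m x y) b]; try simp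
    have hc5_41 : m (m (m a x) b) y = -(m (m b (m a x)) y) := by rw [hanti (m a x) b]; try simp
    have hc5_42 : m (m b x) (m a y) = -(m (m a y) (m b x)) := by rw [hanti (m b x) (m a y)]; try simp
    have hc5_43 : m (m y (m a b)) x = -(m x (m y (m a b))) := by rw [hanti (m y (m a b)) x]; try simp
    have hc5_44 : m (m (m b x) y) a = -(m (m y (m b x)) a) := by rw [hanti (m b x) y]; try simp
    have hc5_45 : m (m a (m b y)) x = -(m x (m a (m b y))) := by rw [hanti (m a (m b y)) x]; try simp
    have hc5_46 : m (m (m a y) x) b = -(m (m x (m a y)) b) := by rw [hanti (m a y) x]; try simp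
    have hc5_47 : m (m b (m a y)) x = -(m x (m b (m a y))) := by rw [hanti (m b (m a y)) x]; try simp
    have hc5_48 : m (m (m b y) x) a = -(m (m x (m b y)) a) := by rw [hanti (m b y) x]; try simp
    have hc5_49 : m (m (m a b) x) y = -(m (m x (m a b)) y) := by rw [hanti (m a b) x]; try simp
    have hc5_50 : m (m a (m b x)) y = -(m y (m a (m b x))) := by rw [hanti (m a (m b x)) y]; try simp
    have hc5_51 : m (m b y) (m a x) = -(m (m a x) (m b y)) := by rw [hanti (m b y) (m a x)]; try simp
    have hc5_52 : m (m (m a x) y) b = -(m (m y (m a x)) b) := by rw [hanti (m a x) y]; try simp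
    have hc5_53 : m (m a (m x y)) b = -(m b (m a (m x y))) := by rw [hanti (m a (m x y)) b]; try simp
    have hc5_54 : m (m b (m x y)) a = -(m a (m b (m x y))) := by rw [hanti (m b (m x y)) a]; try simp
    have hc5_55 : m (m b (m a x)) y = -(m y (m b (m a x))) := by rw [hanti (m b (m a x)) y]; try simp
    have hc5_56 : m (m y (m b x)) a = -(m a (m y (m b x))) := by rw [hanti (m y (m b x)) a]; try simp
    have hc5_57 : m (m x (m a y)) b = -(m b (m x (m a y))) := by rw [hanti (m x (m a y)) b]; try simp
    have hc5_58 : m (m x (m b y)) a = -(m a (m x (m b y))) := by rw [hanti (m x (m b y)) a]; try simp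
    have hc5_59 : m (m x (m a b)) y = -(m y (m x (m a b))) := by rw [hanti (m x (m a b)) y]; try simp
    have hc5_60 : m (m y (m a x)) b = -(m b (m y (m a x))) := by rw [hanti (m y (m a x)) b]; try simp
    linear_combination (norm := module) ((-1/2 : K)) • hml a b x y + ((-1/1 : K)) • hml a b y x + ((-1/1 : K)) • hml a x b y + ((-3/2 : K)) • hml a x y b + ((-1/2 : K)) • hml a y b x + ((-1/1 : K)) • hc5_0 + ((1/1 : K)) • hc5_1 + ((-3/2 : K)) • hc5_2 + ((-1/1 : K)) • hc5_3 + ((1/2 : K)) • hc5_4 + ((-1/2 : K)) • hc5_5 + ((-1/1 : K)) • hc5_6 + ((-1/1 : K)) • hc5_7 + ((-2/1 : K)) • hc5_8 + ((-1/2 : K)) • hc5_9 + ((-2/1 : K)) • hc5_10 + ((1/1 : K)) • hc5_11 + ((-1/1 : K)) • hc5_12 + ((-2/1 : K)) • hc5_13 + ((-2/1 : K)) • hc5_14 + ((-1/1 : K)) • hc5_15 + ((-1/1 : K)) • hc5_16 + ((-1/1 : K)) • hc5_17 + ((1/1 : K)) • hc5_18 + ((-1/1 : K)) • hc5_19 +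 ((-1/1 : K)) • hc5_20 + ((1/1 : K)) • hc5_21 + ((-1/1 : K)) • hc5_22 + ((3/2 : K)) • hc5_23 + ((3/2 : K)) • hc5_24 + ((-1/1 : K)) • hc5_25 + ((-2/1 : K)) • hc5_26 + ((-3/2 : K)) • hc5_27 + ((-1/1 : K)) • hc5_28 + ((1/2 : K)) • hc5_29 + ((1/2 : K)) • hc5_30 + ((-1/2 : K)) • hc5_31 + ((3/2 : K)) • hc5_32 + ((1/2 : K)) • hc5_33 + ((1/1 : K)) • hc5_34 + ((1/1 : K)) • hc5_35 + ((2/1 : K)) • hc5_36 + ((1/1 : K)) • hc5_37 + ((2/1 : K)) • hc5_38 + ((2/1 : K)) • hc5_39 + ((1/1 : K)) • hc5_40 + ((1/1 : K)) • hc5_41 + ((-1/1 : K)) • hc5_42 + ((1/1 : K)) • hc5_43 + ((1/1 : K)) • hc5_44 + ((-1/1 : K)) • hc5_45 + ((1/1 : K)) • hc5_46 + ((1/1 : K)) • hc5_47 + ((2/1 : K)) • hc5_48 + ((3/2 : K)) • hc5_49 + ((1/1 : K)) • hc5_50 + ((-1/2 : K)) • hc5_51 + ((1/2 : K)) • hc5_52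 + ((-2/1 : K)) • hc5_53 + ((-1/1 : K)) • hc5_54 + ((-1/1 : K)) • hc5_55 + ((-1/1 : K)) • hc5_56 + ((-1/1 : K)) • hc5_57 + ((-2/1 : K)) • hc5_58 + ((-3/2 : K)) • hc5_59 + ((-1/2 : K)) • hc5_60
  refine ⟨⟨m, T, ?_, ?_, ?_, ?_, h5', ?_⟩, fun x y => rfl, fun x y z => hT x y z⟩
  · exact hanti
  · intro a b c
    rw [hT, hT]
    have hc2_0 : m (m a b) c = -(m c (m a b)) := by rw [hanti (m a b) c]; try simp
    have hc2_1 : m (m b a) c = -(m (m a b) c) := by rw [hanti b a]; try simp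
    have hc2_2 : m (m a b) c = -(m c (m a b)) := by rw [hanti (m a b) c]; try simp
    linear_combination (norm := module) ((1/1 : K)) • hc2_0 + ((1/1 : K)) • hc2_1 + ((-1/1 : K)) • hc2_2
  · intro a b c
    rw [hT a b c, hT b c a, hT c a b]
    have hc3_0 : m (m a b) c = -(m c (m a b)) := by rw [hanti (m a b) c]; try simp
    have hc3_1 : m (m b c) a = -(m a (m b c)) := by rw [hanti (m b c) a]; try simp
    have hc3_2 : m b (m c a) = -(m b (m a c)) := by rw [hanti c a]; try simp
    have hc3_3 : m c (m b a) = -(m c (m a b)) := by rw [hanti b a]; try simp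
    have hc3_4 : m (m c a) b = -(m (m a c) b) := by rw [hanti c a]; try simp
    have hc3_5 : m a (m c b) = -(m a (m b c)) := by rw [hanti c b]; try simp
    have hc3_6 : m (m a c) b = -(m b (m a c)) := by rw [hanti (m a c) b]; try simp
    linear_combination (norm := module) ((2/1 : K)) • hc3_0 + ((2/1 : K)) • hc3_1 + ((1/1 : K)) • hc3_2 + ((-1/1 : K)) • hc3_3 + ((2/1 : K)) • hc3_4 + ((-1/1 : K)) • hc3_5 + ((-2/1 : K)) • hc3_6
  · intro a b c x
    rw [hT (m a b) c x, hT (m b c) a x, hT (m c a) b x]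
    have hc4_0 : m c (m (m a b) x) = -(m c (m x (m a b))) := by rw [hanti (m a b) x]; try simp
    have hc4_1 : m (m (m a b) c) x = -(m (m c (m a b)) x) := by rw [hanti (m a b) c]; try simp
    have hc4_2 : m (m b c) (m a x) = -(m (m a x) (m b c)) := by rw [hanti (m b c) (m a x)]; try simp
    have hc4_3 : m a (m (m b c) x) = -(m a (m x (m b c))) := by rw [hanti (m b c) x]; try simp
    have hc4_4 : m (m (m b c) a) x = -(m (m a (m b c)) x) := by rw [hanti (m b c) a]; try simp
    have hc4_5 : m (m c a) (m b x) = -(m (m a c) (m b x)) := by rw [hanti c a]; try simp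
    have hc4_6 : m b (m (m c a) x) = -(m b (m (m a c) x)) := by rw [hanti c a]; try simp
    have hc4_7 : m (m (m a c) x) b = -(m (m x (m a c)) b) := by rw [hanti (m a c) x]; try simp
    have hc4_8 : m (m (m b c) x) a = -(m (m x (m b c)) a) := by rw [hanti (m b c) x]; try simp
    have hc4_9 : m (m (m c x) a) b = -(m (m a (m c x)) b) := by rw [hanti (m c x) a]; try simp
    have hc4_10 : m (m (m c x) b) a = -(m (m b (m c x)) a) := by rw [hanti (m c x) b]; try simp
    have hc4_11 : m (m (m x a) b) c = -(m (m (m a x) b) c) := by rw [hanti x a]; try simp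
    have hc4_12 : m (m (m x b) a) c = -(m (m (m b x) a) c) := by rw [hanti x b]; try simp
    have hc4_13 : m (m b x) (m a c) = -(m (m a c) (m b x)) := by rw [hanti (m b x) (m a c)]; try simp
    have hc4_14 : m (m (m a x) c) b = -(m (m c (m a x)) b) := by rw [hanti (m a x) c]; try simp
    have hc4_15 : m (m (m b x) c) a = -(m (m c (m b x)) a) := by rw [hanti (m b x) c]; try simp
    have hc4_16 : m (m (m x c) a) b = -(m (m (m c x) a) b) := by rw [hanti x c]; try simp
    have hc4_17 : m (m (m x c) b) a = -(m (m (m c x) b) a) := by rw [hanti x c]; try simp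
    have hc4_18 : m (m (m c b) a) x = -(m (m (m b c) a) x) := by rw [hanti c b]; try simp
    have hc4_19 : m (m c b) (m a x) = -(m (m b c) (m a x)) := by rw [hanti c b]; try simp
    have hc4_20 : m (m (m a b) x) c = -(m (m x (m a b)) c) := by rw [hanti (m a b) x]; try simp
    have hc4_21 : m (m (m c b) x) a = -(m (m (m b c) x) a) := by rw [hanti c b]; try simp
    have hc4_22 : m (m (m x a) c) b = -(m (m (m a x) c) b) := by rw [hanti x a]; try simp
    have hc4_23 : m (m a x) (m c b) = -(m (m a x) (m b c)) := by rw [hanti c b]; try simp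
    have hc4_24 : m (m c x) (m a b) = -(m (m a b) (m c x)) := by rw [hanti (m c x) (m a b)]; try simp
    have hc4_25 : m (m (m x b) c) a = -(m (m (m b x) c) a) := by rw [hanti x b]; try simp
    have hc4_26 : m (m (m b a) c) x = -(m (m (m a b) c) x) := by rw [hanti b a]; try simp
    have hc4_27 : m (m a b) (m x c) = -(m (m a b) (m c x)) := by rw [hanti x c]; try simp
    have hc4_28 : m (m x b) (m a c) = -(m (m b x) (m a c)) := by rw [hanti x b]; try simp
    have hc4_29 : m (m (m c a) x) b = -(m (m (m a c) x) b) := by rw [hanti c a]; try simp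
    have hc4_30 : m (m c (m a b)) x = -(m x (m c (m a b))) := by rw [hanti (m c (m a b)) x]; try simp
    have hc4_31 : m (m a (m b c)) x = -(m x (m a (m b c))) := by rw [hanti (m a (m b c)) x]; try simp
    have hc4_32 : m b (m (m a c) x) = -(m b (m x (m a c))) := by rw [hanti (m a c) x]; try simp
    have hc4_33 : m (m x (m a c)) b = -(m b (m x (m a c))) := by rw [hanti (m x (m a c)) b]; try simp
    have hc4_34 : m (m x (m b c)) a = -(m a (m x (m b c))) := by rw [hanti (m x (m b c)) a]; try simp
    have hc4_35 : m (m a (m c x)) b = -(m b (m a (m c x))) := by rw [hanti (m a (m c x)) b]; try simp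
    have hc4_36 : m (m b (m c x)) a = -(m a (m b (m c x))) := by rw [hanti (m b (m c x)) a]; try simp
    have hc4_37 : m (m c (m a x)) b = -(m b (m c (m a x))) := by rw [hanti (m c (m a x)) b]; try simp
    have hc4_38 : m (m c (m b x)) a = -(m a (m c (m b x))) := by rw [hanti (m c (m b x)) a]; try simp
    have hc4_39 : m (m (m c x) a) b = -(m (m a (m c x)) b) := by rw [hanti (m c x) a]; try simp
    have hc4_40 : m (m (m c x) b) a = -(m (m b (m c x)) a) := by rw [hanti (m c x) b]; try simp
    have hc4_41 : m (m (m b c) a) x = -(m (m a (m b c)) x) := by rw [hanti (m b c) a]; try simp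
    have hc4_42 : m (m b c) (m a x) = -(m (m a x) (m b c)) := by rw [hanti (m b c) (m a x)]; try simp
    have hc4_43 : m (m x (m a b)) c = -(m c (m x (m a b))) := by rw [hanti (m x (m a b)) c]; try simp
    have hc4_44 : m (m (m b c) x) a = -(m (m x (m b c)) a) := by rw [hanti (m b c) x]; try simp
    have hc4_45 : m (m (m a x) c) b = -(m (m c (m a x)) b) := by rw [hanti (m a x) c]; try simp
    have hc4_46 : m (m (m b x) c) a = -(m (m c (m b x)) a) := by rw [hanti (m b x) c]; try simp
    have hc4_47 : m (m (m a b) c) x = -(m (m c (m a b)) x) := by rw [hanti (m a b) c]; try simp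
    have hc4_48 : m (m b x) (m a c) = -(m (m a c) (m b x)) := by rw [hanti (m b x) (m a c)]; try simp
    have hc4_49 : m (m (m a c) x) b = -(m (m x (m a c)) b) := by rw [hanti (m a c) x]; try simp
    have hc4_50 : m (m a (m c x)) b = -(m b (m a (m c x))) := by rw [hanti (m a (m c x)) b]; try simp
    have hc4_51 : m (m b (m c x)) a = -(m a (m b (m c x))) := by rw [hanti (m b (m c x)) a]; try simp
    have hc4_52 : m (m a (m b c)) x = -(m x (m a (m b c))) := by rw [hanti (m a (m b c)) x]; try simp
    have hc4_53 : m (m x (m b c)) a = -(m a (m x (m b c))) := by rw [hanti (m x (m b c)) a]; try simp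
    have hc4_54 : m (m c (m a x)) b = -(m b (m c (m a x))) := by rw [hanti (m c (m a x)) b]; try simp
    have hc4_55 : m (m c (m b x)) a = -(m a (m c (m b x))) := by rw [hanti (m c (m b x)) a]; try simp
    have hc4_56 : m (m c (m a b)) x = -(m x (m c (m a b))) := by rw [hanti (m c (m a b)) x]; try simp
    have hc4_57 : m (m x (m a c)) b = -(m b (m x (m a c))) := by rw [hanti (m x (m a c)) b]; try simp
    linear_combination (norm := module) ((-1/2 : K)) • hml a b c x + ((-1/1 : K)) • hml a b x c + ((-1/1 : K)) • hml a c b x + ((-1/2 : K)) • hml a c x b + ((-3/2 : K)) • hml a x b c + ((-1/1 : K)) • hc4_0 + ((-1/2 : K)) • hc4_1 + ((3/2 : K)) • hc4_2 + ((-1/1 : K)) • hc4_3 + ((-1/1 : K)) • hc4_4 + ((1/1 : K)) • hc4_5 + ((-1/1 : K)) • hc4_6 + ((-1/2 : K)) • hc4_7 + ((-2/1 : K)) • hc4_8 + ((-2/1 : K)) • hc4_9 + ((-1/1 : K)) • hc4_10 + ((-1/2 : K)) • hc4_11 + ((-1/1 : K)) • hc4_12 + ((1/1 : K)) • hc4_13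 + ((-1/1 : K)) • hc4_14 + ((-2/1 : K)) • hc4_15 + ((-2/1 : K)) • hc4_16 + ((-1/1 : K)) • hc4_17 + ((-1/1 : K)) • hc4_18 + ((1/1 : K)) • hc4_19 + ((-1/1 : K)) • hc4_20 + ((-1/1 : K)) • hc4_21 + ((-1/1 : K)) • hc4_22 + ((1/2 : K)) • hc4_23 + ((1/2 : K)) • hc4_24 + ((-2/1 : K)) • hc4_25 + ((-1/2 : K)) • hc4_26 + ((3/2 : K)) • hc4_27 + ((3/2 : K)) • hc4_28 + ((-3/2 : K)) • hc4_29 + ((1/2 : K)) • hc4_30 + ((1/1 : K)) • hc4_31 + ((1/1 : K)) • hc4_32 + ((1/2 : K)) • hc4_33 + ((2/1 : K)) • hc4_34 + ((2/1 : K)) • hc4_35 + ((1/1 : K)) • hc4_36 + ((1/1 : K)) • hc4_37 + ((2/1 : K)) • hc4_38 + ((2/1 : K)) • hc4_39 + ((1/1 : K)) • hc4_40 + ((1/1 : K)) • hc4_41 + ((-1/1 : K)) • hc4_42 + ((1/1 : K)) • hc4_43 + ((1/1 : K)) • hc4_44 + ((1/1 : K)) • hc4_45 + ((2/1 : K)) •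 hc4_46 + ((1/2 : K)) • hc4_47 + ((-3/2 : K)) • hc4_48 + ((3/2 : K)) • hc4_49 + ((-2/1 : K)) • hc4_50 + ((-1/1 : K)) • hc4_51 + ((-1/1 : K)) • hc4_52 + ((-1/1 : K)) • hc4_53 + ((-1/1 : K)) • hc4_54 + ((-2/1 : K)) • hc4_55 + ((-1/2 : K)) • hc4_56 + ((-3/2 : K)) • hc4_57
  · intro a b x y z
    rw [hT x y z]
    simp only [map_sub, map_add]
    simp only [h5']
    simp only [hT]
    simp only [map_add, map_sub, LinearMap.add_apply, LinearMap.sub_apply]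
    abel
end

section
/- Every Leibniz algebra (L,·) becomes a Lie-Yamaguti algebra with binary bracket [a,b] := a·b - b·a and ternary bracket {a,b,c} := -(a·b)·c. -/
/-- Every (left) Leibniz algebra becomes a Lie-Yamaguti algebra with
`[a,b] := a·b - b·a` and `{a,b,c} := -(a·b)·c`. -/
theorem stmt2 (K L : Type*) [Field K] [CharZero K] [AddCommGroup L] [Module K L]
    (mul : L →ₗ[K] L →ₗ[K] L)
    (hleib : ∀ a b c, mul a (mul b c) = mul (mul a b) c + mul b (mul a c)) :
    ∃ S : LYStruct K L, (∀ a b, S.br a b = mul a b - mul b a) ∧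
      (∀ a b c, S.tr a b c = - mul (mul a b) c) := by
  have h1 : ∀ a b c, mul (mul a b) c = mul a (mul b c) - mul b (mul a c) := by
    intro a b c; rw [hleib a b c]; abel
  refine ⟨⟨mul - mul.flip, -(mul.compr₂ mul), ?_, ?_, ?_, ?_, ?_, ?_⟩, ?_, ?_⟩ <;>
    intros <;>
    simp only [LinearMap.sub_apply, LinearMap.neg_apply, LinearMap.flip_apply,
      LinearMap.compr₂_apply, map_sub, map_neg, map_add, h1] <;>
    abel
end

section
/- Let 0 → V → L̃ → L → 0 be an abelian extension of Lie-Yamaguti algebras with section s, induced representation (ρ,D,θ), and induced cochains α(a,b)=[s(a),s(b)]-s([a,b]), β(a,b,c)={s(a),s(b),s(c)}-s({a,b,c}). Then δ*_I α(a,b,c) := -ρ(a)α(b,c) - ρ(b)α(c,a) - ρ(c)α(a,b) + α([a,b],c) + α([b,c],a) + α([c,a],b) + β(a,b,c) + β(b,c,a) + β(c,a,b) = 0 for all a,b,c ∈ L. -/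
/-- An abelian extension `0 → V → L̃ → L → 0` of Lie-Yamaguti algebras, with
`V = ker p` an abelian ideal of `L̃`. -/
structure AbExt {K Lt L : Type*} [Field K] [AddCommGroup Lt] [Module K Lt]
    [AddCommGroup L] [Module K L] (St : LYStruct K Lt) (S : LYStruct K L) where
  p : Lt →ₗ[K] L
  surj : Function.Surjective p
  map_br : ∀ x y, p (St.br x y) = S.br (p x) (p y)
  map_tr : ∀ x y z, p (St.tr x y z) = S.tr (p x) (p y) (p z)
  ab_br : ∀ u v, p u = 0 → p v = 0 → St.br u v = 0
  ab_tr₁ : ∀ u v x, p u = 0 → p v = 0 → St.tr u v x = 0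
  ab_tr₂ : ∀ u v x, p u = 0 → p v = 0 → St.tr u x v = 0
  ab_tr₃ : ∀ u v x, p u = 0 → p v = 0 → St.tr x u v = 0

/-- For an abelian extension with section `s` and induced cochain `(α, β)`,
`δ*_I α = 0`. -/
theorem stmt7 {K Lt L : Type*} [Field K] [AddCommGroup Lt] [Module K Lt]
    [AddCommGroup L] [Module K L] {St : LYStruct K Lt} {S : LYStruct K L}
    (E : AbExt St S) (s : L →ₗ[K] Lt) (hs : ∀ a, E.p (s a) = a)
    (α : L → L → Lt) (hα : ∀ a b, α a b = St.br (s a) (s b) - s (S.br a b))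
    (β : L → L → L → Lt)
    (hβ : ∀ a b c, β a b c = St.tr (s a) (s b) (s c) - s (S.tr a b c)) :
    ∀ a b c,
      - St.br (s a) (α b c) - St.br (s b) (α c a) - St.br (s c) (α a b)
        + α (S.br a b) c + α (S.br b c) a + α (S.br c a) b
        + β a b c + β b c a + β c a b = 0 := by
  intro a b c
  have h3 := St.ly3 (s a) (s b) (s c)
  have h3' := congrArg s (S.ly3 a b c)
  simp only [map_add, map_zero] at h3'
  simp only [hα, hβ, map_sub, LinearMap.sub_apply]
  rw [St.ly1 (s (S.br a b)) (s c), St.ly1 (s (S.br b c)) (s a),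
    St.ly1 (s (S.br c a)) (s b),
    St.ly1 (s a) (St.br (s b) (s c)), St.ly1 (s b) (St.br (s c) (s a)),
    St.ly1 (s c) (St.br (s a) (s b))]
  linear_combination (norm := abel) h3 - h3'
end

section
/- Let 0 → V → L̃ → L → 0 be an abelian extension of Lie-Yamaguti algebras with section s, induced representation (ρ,D,θ), and induced cochains α, β. Then δ*_II β(a,b,c,d) := θ(a,d)α(b,c) + θ(b,d)α(c,a) + θ(c,d)α(a,b) + β([a,b],c,d) + β([b,c],a,d) + β([c,a],b,d) = 0 for all a,b,c,d ∈ L. -/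
/-- For an abelian extension with section `s` and induced cochain `(α, β)`,
`δ*_II β = 0`. -/
theorem stmt8 {K Lt L : Type*} [Field K] [AddCommGroup Lt] [Module K Lt]
    [AddCommGroup L] [Module K L] {St : LYStruct K Lt} {S : LYStruct K L}
    (E : AbExt St S) (s : L →ₗ[K] Lt) (hs : ∀ a, E.p (s a) = a)
    (α : L → L → Lt) (hα : ∀ a b, α a b = St.br (s a) (s b) - s (S.br a b))
    (β : L → L → L → Lt)
    (hβ : ∀ a b c, β a b c = St.tr (s a) (s b) (s c) - s (S.tr a b c)) :
    ∀ a b c d,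
      St.tr (α b c) (s a) (s d) + St.tr (α c a) (s b) (s d)
        + St.tr (α a b) (s c) (s d)
        + β (S.br a b) c d + β (S.br b c) a d + β (S.br c a) b d = 0 := by
  intro a b c d
  have h1 := St.ly4 (s a) (s b) (s c) (s d)
  have h3 : s (S.tr (S.br a b) c d) + s (S.tr (S.br b c) a d)
      + s (S.tr (S.br c a) b d) = 0 := by
    rw [← s.map_add, ← s.map_add, S.ly4, s.map_zero]
  simp only [hα, hβ]
  calc St.tr (St.br (s b) (s c) - s (S.br b c)) (s a) (s d)
        + St.tr (St.br (s c) (s a) - s (S.br c a)) (s b) (s d)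
        + St.tr (St.br (s a) (s b) - s (S.br a b)) (s c) (s d)
        + (St.tr (s (S.br a b)) (s c) (s d) - s (S.tr (S.br a b) c d))
        + (St.tr (s (S.br b c)) (s a) (s d) - s (S.tr (S.br b c) a d))
        + (St.tr (s (S.br c a)) (s b) (s d) - s (S.tr (S.br c a) b d))
      = (St.tr (St.br (s a) (s b)) (s c) (s d) + St.tr (St.br (s b) (s c)) (s a) (s d)
          + St.tr (St.br (s c) (s a)) (s b) (s d))
        - (s (S.tr (S.br a b) c d) + s (S.tr (S.br b c) a d) + s (S.tr (S.br c a) b d)) := by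
        simp only [map_sub, LinearMap.sub_apply]; abel
    _ = 0 := by rw [h1, h3, sub_zero]
end

section
/- Let 0 → V → L̃ →p L → 0 be an abelian extension of Lie-Yamaguti algebras with section s. If a pair (φ,ψ) ∈ Aut(V) × Aut(L) is inducible, i.e., there exists γ ∈ Aut(L̃) with γ(V)=V, γ|_V = φ and p∘γ∘s = ψ, then φ∘ρ(a) = ρ(ψ(a))∘φ, φ∘D(a,b) = D(ψ(a),ψ(b))∘φ, and φ∘θ(a,b) = θ(ψ(a),ψ(b))∘φ for all a,b ∈ L, where (ρ,D,θ) is the induced representation of L on V. -/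
/-- `γ` is a Lie-Yamaguti algebra automorphism of `(L, S)`. -/
def IsLYAut {K L : Type*} [Field K] [AddCommGroup L] [Module K L]
    (S : LYStruct K L) (γ : L →ₗ[K] L) : Prop :=
  Function.Bijective γ ∧ (∀ x y, γ (S.br x y) = S.br (γ x) (γ y)) ∧
    (∀ x y z, γ (S.tr x y z) = S.tr (γ x) (γ y) (γ z))

/-- If a pair `(φ, ψ)` is inducible by some `γ ∈ Aut_V(L̃)`, then `φ` intertwines
the induced representation with the `ψ`-twisted one:
`φ∘ρ(a) = ρ(ψ a)∘φ`, `φ∘D(a,b) = D(ψ a, ψ b)∘φ`, `φ∘θ(a,b) = θ(ψ a, ψ b)∘φ`. -/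
theorem stmt11 {K Lt L : Type*} [Field K] [AddCommGroup Lt] [Module K Lt]
    [AddCommGroup L] [Module K L] {St : LYStruct K Lt} {S : LYStruct K L}
    (E : AbExt St S) (s : L →ₗ[K] Lt) (hs : ∀ a, E.p (s a) = a)
    (φ : LinearMap.ker E.p →ₗ[K] LinearMap.ker E.p) (hφ : Function.Bijective φ)
    (ψ : L →ₗ[K] L) (hψ : IsLYAut S ψ)
    (γ : Lt →ₗ[K] Lt) (hγ : IsLYAut St γ)
    (hγV : ∀ v, E.p v = 0 ↔ E.p (γ v) = 0)
    (hγφ : ∀ v : LinearMap.ker E.p, γ (v : Lt) = (φ v : Lt))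
    (hγψ : ∀ a, E.p (γ (s a)) = ψ a) :
    (∀ (a : L) (v w : LinearMap.ker E.p), (w : Lt) = St.br (s a) (v : Lt) →
      (φ w : Lt) = St.br (s (ψ a)) (φ v : Lt)) ∧
    (∀ (a b : L) (v w : LinearMap.ker E.p),
      (w : Lt) = St.tr (s a) (s b) (v : Lt) →
      (φ w : Lt) = St.tr (s (ψ a)) (s (ψ b)) (φ v : Lt)) ∧
    (∀ (a b : L) (v w : LinearMap.ker E.p),
      (w : Lt) = St.tr (v : Lt) (s a) (s b) →
      (φ w : Lt) = St.tr (φ v : Lt) (s (ψ a)) (s (ψ b))) := by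
  have hk : ∀ a, E.p (γ (s a) - s (ψ a)) = 0 := by
    intro a; rw [map_sub, hγψ, hs, sub_self]
  have hγs : ∀ a, γ (s a) = s (ψ a) + (γ (s a) - s (ψ a)) := fun a => by abel
  have hker : ∀ v : LinearMap.ker E.p, E.p (γ (v : Lt)) = 0 := fun v => by
    rw [hγφ]; exact (φ v).2
  refine ⟨?_, ?_, ?_⟩
  · intro a v w hw
    rw [← hγφ, hw, hγ.2.1, ← hγφ, hγs a, map_add, LinearMap.add_apply,
      E.ab_br _ _ (hk a) (hker v), add_zero]
  · intro a b v w hw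
    rw [← hγφ, hw, hγ.2.2, ← hγφ, hγs a, hγs b]
    simp only [map_add, LinearMap.add_apply]
    rw [E.ab_tr₂ _ _ _ (hk a) (hker v), E.ab_tr₁ _ _ _ (hk a) (hk b),
      E.ab_tr₃ _ _ _ (hk b) (hker v)]
    abel
  · intro a b v w hw
    rw [← hγφ, hw, hγ.2.2, ← hγφ, hγs a, hγs b]
    simp only [map_add, LinearMap.add_apply]
    rw [E.ab_tr₁ _ _ _ (hker v) (hk a), E.ab_tr₂ _ _ _ (hker v) (hk b),
      E.ab_tr₁ _ _ _ (hker v) (hk a)]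
    abel
end

section
/- Let 0 → V → L̃ →p L → 0 be an abelian extension of Lie-Yamaguti algebras with section s and induced cocycle (α,β). Suppose (φ,ψ) ∈ Aut(V) × Aut(L) is a compatible pair and there exists a linear map λ: L → V such that φ(α(ψ⁻¹a, ψ⁻¹b)) - α(a,b) = δ_I λ(a,b) and φ(β(ψ⁻¹a, ψ⁻¹b, ψ⁻¹c)) - β(a,b,c) = δ_II λ(a,b,c) for all a,b,c ∈ L. Then the map γ: L̃ → L̃ defined by γ(v + s(a)) := φ(v) + λ(ψ(a)) + s(ψ(a)) is a Lie-Yamaguti algebra automorphism of L̃ satisfying γ(V)=V, γ|_V = φ, and p∘γ∘s = ψ. -/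
set_option maxHeartbeats 1600000 in
/-- If `(φ, ψ)` is a compatible pair whose twisted cocycle differs from `(α, β)`
by the coboundary of `λ`, then `γ(v + s a) := φ(v) + λ(ψ a) + s(ψ a)` is an
automorphism of `L̃` inducing `(φ, ψ)`. -/
theorem stmt13 {K Lt L : Type*} [Field K] [AddCommGroup Lt] [Module K Lt]
    [AddCommGroup L] [Module K L] {St : LYStruct K Lt} {S : LYStruct K L}
    (E : AbExt St S) (s : L →ₗ[K] Lt) (hs : ∀ a, E.p (s a) = a)
    (φ : LinearMap.ker E.p →ₗ[K] LinearMap.ker E.p) (hφ : Function.Bijective φ)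
    (ψ : L ≃ₗ[K] L)
    (hψbr : ∀ a b, ψ (S.br a b) = S.br (ψ a) (ψ b))
    (hψtr : ∀ a b c, ψ (S.tr a b c) = S.tr (ψ a) (ψ b) (ψ c))
    -- compatibility of the pair (φ, ψ)
    (hcomp₁ : ∀ (a : L) (v w : LinearMap.ker E.p),
      (w : Lt) = St.br (s a) (v : Lt) →
      (φ w : Lt) = St.br (s (ψ a)) (φ v : Lt))
    (hcomp₂ : ∀ (a b : L) (v w : LinearMap.ker E.p),
      (w : Lt) = St.tr (s a) (s b) (v : Lt) →
      (φ w : Lt) = St.tr (s (ψ a)) (s (ψ b)) (φ v : Lt))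
    (hcomp₃ : ∀ (a b : L) (v w : LinearMap.ker E.p),
      (w : Lt) = St.tr (v : Lt) (s a) (s b) →
      (φ w : Lt) = St.tr (φ v : Lt) (s (ψ a)) (s (ψ b)))
    (α : L → L → Lt) (hα : ∀ a b, α a b = St.br (s a) (s b) - s (S.br a b))
    (β : L → L → L → Lt)
    (hβ : ∀ a b c, β a b c = St.tr (s a) (s b) (s c) - s (S.tr a b c))
    (l : L →ₗ[K] Lt) (hl : ∀ a, E.p (l a) = 0)
    -- φ∘α∘(ψ⁻¹,ψ⁻¹) - α = δ_I λ
    (hcobI : ∀ (a b : L) (w : LinearMap.ker E.p),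
      (w : Lt) = α (ψ.symm a) (ψ.symm b) →
      (φ w : Lt) - α a b
        = St.br (s a) (l b) - St.br (s b) (l a) - l (S.br a b))
    -- φ∘β∘(ψ⁻¹,ψ⁻¹,ψ⁻¹) - β = δ_II λ
    (hcobII : ∀ (a b c : L) (w : LinearMap.ker E.p),
      (w : Lt) = β (ψ.symm a) (ψ.symm b) (ψ.symm c) →
      (φ w : Lt) - β a b c
        = St.tr (l a) (s b) (s c) - St.tr (l b) (s a) (s c)
          + St.tr (s a) (s b) (l c) - l (S.tr a b c)) :
    ∃ γ : Lt →ₗ[K] Lt,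
      (∀ (v : LinearMap.ker E.p) (a : L),
        γ ((v : Lt) + s a) = (φ v : Lt) + l (ψ a) + s (ψ a)) ∧
      IsLYAut St γ ∧
      (∀ v, E.p v = 0 ↔ E.p (γ v) = 0) ∧
      (∀ v : LinearMap.ker E.p, γ (v : Lt) = (φ v : Lt)) ∧
      (∀ a, E.p (γ (s a)) = ψ a) := by
  classical
  -- membership of x - s (p x) in ker p
  set f0 : Lt →ₗ[K] Lt := LinearMap.id - s ∘ₗ E.p with hf0
  have hmem : ∀ x : Lt, f0 x ∈ LinearMap.ker E.p := by
    intro x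
    simp [hf0, LinearMap.mem_ker, map_sub, hs]
  set q : Lt →ₗ[K] LinearMap.ker E.p :=
    LinearMap.codRestrict _ f0 hmem with hqdef
  have hqcoe : ∀ x : Lt, (q x : Lt) = x - s (E.p x) := by
    intro x; simp [hqdef, hf0]
  set γ : Lt →ₗ[K] Lt :=
    (LinearMap.ker E.p).subtype ∘ₗ φ ∘ₗ q
      + (l + s) ∘ₗ (ψ : L →ₗ[K] L) ∘ₗ E.p with hγdef
  have hγapp : ∀ z, γ z = (φ (q z) : Lt) + l (ψ (E.p z)) + s (ψ (E.p z)) := by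
    intro z; simp [hγdef, add_assoc]
  have hq : ∀ (v : LinearMap.ker E.p) (a : L), q ((v : Lt) + s a) = v := by
    intro v a
    have hv := LinearMap.mem_ker.mp v.2
    ext
    simp [hqcoe, hv, hs]
  have hγ : ∀ (v : LinearMap.ker E.p) (a : L),
      γ ((v : Lt) + s a) = (φ v : Lt) + l (ψ a) + s (ψ a) := by
    intro v a
    have hv := LinearMap.mem_ker.mp v.2
    rw [hγapp, hq]
    simp [hv, hs]
  have hdecomp : ∀ x : Lt, x = (q x : Lt) + s (E.p x) := by
    intro x; rw [hqcoe]; abel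
  have hpγ : ∀ x, E.p (γ x) = ψ (E.p x) := by
    intro x
    rw [hγapp]
    have h1 : E.p ((φ (q x) : Lt)) = 0 := LinearMap.mem_ker.mp (φ (q x)).2
    simp [h1, hl, hs]
  -- expansion of the binary bracket
  have hbrmem : ∀ (u v : LinearMap.ker E.p) (a b : L),
      St.br (s a) (v : Lt) - St.br (s b) (u : Lt) + α a b ∈ LinearMap.ker E.p := by
    intro u v a b
    have hu := LinearMap.mem_ker.mp u.2
    have hv := LinearMap.mem_ker.mp v.2
    simp [LinearMap.mem_ker, E.map_br, hα, hs, hu, hv]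
  have hbrexp : ∀ (u v : LinearMap.ker E.p) (a b : L),
      St.br ((u : Lt) + s a) ((v : Lt) + s b)
        = (St.br (s a) (v : Lt) - St.br (s b) (u : Lt) + α a b) + s (S.br a b) := by
    intro u v a b
    have hu := LinearMap.mem_ker.mp u.2
    have hv := LinearMap.mem_ker.mp v.2
    have h0 : St.br (u : Lt) (v : Lt) = 0 := E.ab_br _ _ hu hv
    have h1 : St.br (u : Lt) (s b) = - St.br (s b) (u : Lt) := St.ly1 _ _
    have h2 : St.br (s a) (s b) = α a b + s (S.br a b) := by rw [hα]; abel
    simp only [map_add, LinearMap.add_apply, h0, h1, h2]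
    abel
  -- expansion of the ternary bracket
  have htrmem1 : ∀ (u : LinearMap.ker E.p) (b c : L),
      St.tr (u : Lt) (s b) (s c) ∈ LinearMap.ker E.p := by
    intro u b c
    have hu := LinearMap.mem_ker.mp u.2
    simp [LinearMap.mem_ker, E.map_tr, hs, hu]
  have htrmem3 : ∀ (w : LinearMap.ker E.p) (a b : L),
      St.tr (s a) (s b) (w : Lt) ∈ LinearMap.ker E.p := by
    intro w a b
    have hw := LinearMap.mem_ker.mp w.2
    simp [LinearMap.mem_ker, E.map_tr, hs, hw]
  have hβmem : ∀ a b c : L, β a b c ∈ LinearMap.ker E.p := by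
    intro a b c
    simp [LinearMap.mem_ker, hβ, E.map_tr, hs]
  have htrexp : ∀ (u v w : LinearMap.ker E.p) (a b c : L),
      St.tr ((u : Lt) + s a) ((v : Lt) + s b) ((w : Lt) + s c)
        = (St.tr (u : Lt) (s b) (s c) - St.tr (v : Lt) (s a) (s c)
            + St.tr (s a) (s b) (w : Lt) + β a b c) + s (S.tr a b c) := by
    intro u v w a b c
    have hu := LinearMap.mem_ker.mp u.2
    have hv := LinearMap.mem_ker.mp v.2
    have hw := LinearMap.mem_ker.mp w.2
    have h1 : St.tr (u : Lt) (v : Lt) (s c) = 0 := E.ab_tr₁ _ _ _ hu hv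
    have h2 : St.tr (u : Lt) (v : Lt) (w : Lt) = 0 := E.ab_tr₁ _ _ _ hu hv
    have h3 : St.tr (u : Lt) (s b) (w : Lt) = 0 := E.ab_tr₂ _ _ _ hu hw
    have h4 : St.tr (s a) (v : Lt) (w : Lt) = 0 := E.ab_tr₃ _ _ _ hv hw
    have h5 : St.tr (s a) (v : Lt) (s c) = - St.tr (v : Lt) (s a) (s c) := St.ly2 _ _ _
    have h6 : St.tr (s a) (s b) (s c) = β a b c + s (S.tr a b c) := by rw [hβ]; abel
    simp only [map_add, LinearMap.add_apply, h1, h2, h3, h4, h5, h6]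
    abel
  refine ⟨γ, hγ, ⟨?_, ?_, ?_⟩, ?_, ?_, ?_⟩
  · -- bijectivity
    constructor
    · -- injective
      rw [← LinearMap.ker_eq_bot]
      rw [LinearMap.ker_eq_bot']
      intro x hx
      have hpx : E.p x = 0 := by
        have := hpγ x
        rw [hx, map_zero] at this
        exact ψ.injective (by simpa using this.symm)
      have hx2 : γ x = (φ (q x) : Lt) := by
        rw [hγapp, hpx]; simp
      have : (φ (q x) : Lt) = 0 := by rw [← hx2, hx]
      have hq0 : φ (q x) = 0 := Subtype.ext this
      have hq0' : q x = 0 := by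
        apply hφ.injective
        rw [hq0, map_zero]
      have := hqcoe x
      rw [hq0', hpx] at this
      simpa using this.symm
    · -- surjective
      intro y
      set b := E.p y with hb
      have hlb : l b ∈ LinearMap.ker E.p := LinearMap.mem_ker.mpr (hl b)
      obtain ⟨v, hv⟩ := hφ.surjective (q y - ⟨l b, hlb⟩)
      refine ⟨(v : Lt) + s (ψ.symm b), ?_⟩
      rw [hγ, ψ.apply_symm_apply, hv]
      have : ((q y - ⟨l b, hlb⟩ : LinearMap.ker E.p) : Lt) = (q y : Lt) - l b := rfl
      rw [this, hqcoe, ← hb]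
      abel
  · -- binary bracket homomorphism
    intro x y
    set a := E.p x with ha
    set b := E.p y with hb
    set u := q x with hu
    set v := q y with hv
    have hx : x = (u : Lt) + s a := hdecomp x
    have hy : y = (v : Lt) + s b := hdecomp y
    -- pieces of the kernel part
    have hbr1mem : ∀ (v : LinearMap.ker E.p) (a : L),
        St.br (s a) (v : Lt) ∈ LinearMap.ker E.p := by
      intro v a
      have hv := LinearMap.mem_ker.mp v.2
      simp [LinearMap.mem_ker, E.map_br, hs, hv]
    have hαmem : α a b ∈ LinearMap.ker E.p := by
      simp [LinearMap.mem_ker, hα, E.map_br, hs]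
    set w1 : LinearMap.ker E.p := ⟨St.br (s a) (v : Lt), hbr1mem v a⟩ with hw1
    set w2 : LinearMap.ker E.p := ⟨St.br (s b) (u : Lt), hbr1mem u b⟩ with hw2
    set w3 : LinearMap.ker E.p := ⟨α a b, hαmem⟩ with hw3
    have hW : St.br x y = ((w1 - w2 + w3 : LinearMap.ker E.p) : Lt) + s (S.br a b) := by
      rw [hx, hy, hbrexp]
      push_cast [hw1, hw2, hw3]
      rfl
    have hlψ : ∀ c : L, l c ∈ LinearMap.ker E.p := fun c => LinearMap.mem_ker.mpr (hl c)
    set u' : LinearMap.ker E.p := φ u + ⟨l (ψ a), hlψ _⟩ with hu'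
    set v' : LinearMap.ker E.p := φ v + ⟨l (ψ b), hlψ _⟩ with hv'
    have hγx : γ x = (u' : Lt) + s (ψ a) := by rw [hx, hγ]; rfl
    have hγy : γ y = (v' : Lt) + s (ψ b) := by rw [hy, hγ]; rfl
    have e1 : (φ w1 : Lt) = St.br (s (ψ a)) (φ v : Lt) := hcomp₁ a v w1 rfl
    have e2 : (φ w2 : Lt) = St.br (s (ψ b)) (φ u : Lt) := hcomp₁ b u w2 rfl
    have hw3' : (w3 : Lt) = α (ψ.symm (ψ a)) (ψ.symm (ψ b)) := by
      rw [ψ.symm_apply_apply, ψ.symm_apply_apply]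
    have e3 : (φ w3 : Lt)
        = (St.br (s (ψ a)) (l (ψ b)) - St.br (s (ψ b)) (l (ψ a)) - l (S.br (ψ a) (ψ b)))
          + α (ψ a) (ψ b) :=
      sub_eq_iff_eq_add.mp (hcobI (ψ a) (ψ b) w3 hw3')
    have hφW : (φ (w1 - w2 + w3) : Lt) = (φ w1 : Lt) - (φ w2 : Lt) + (φ w3 : Lt) := by
      rw [map_add, map_sub]; push_cast; ring_nf
    have hcu : (u' : Lt) = (φ u : Lt) + l (ψ a) := rfl
    have hcv : (v' : Lt) = (φ v : Lt) + l (ψ b) := rfl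
    rw [hW, hγ, hγx, hγy, hbrexp u' v' (ψ a) (ψ b), hψbr, hφW, e1, e2, e3, hcu, hcv]
    simp only [map_add, LinearMap.add_apply]
    abel
  · -- ternary bracket homomorphism
    intro x y z
    set a := E.p x with ha
    set b := E.p y with hb
    set c := E.p z with hc
    set u := q x with hu
    set v := q y with hv
    set w := q z with hw
    have hx : x = (u : Lt) + s a := hdecomp x
    have hy : y = (v : Lt) + s b := hdecomp y
    have hz : z = (w : Lt) + s c := hdecomp z
    set w1 : LinearMap.ker E.p := ⟨St.tr (u : Lt) (s b) (s c), htrmem1 u b c⟩ with hw1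
    set w2 : LinearMap.ker E.p := ⟨St.tr (v : Lt) (s a) (s c), htrmem1 v a c⟩ with hw2
    set w3 : LinearMap.ker E.p := ⟨St.tr (s a) (s b) (w : Lt), htrmem3 w a b⟩ with hw3
    set w4 : LinearMap.ker E.p := ⟨β a b c, hβmem a b c⟩ with hw4
    have hW : St.tr x y z
        = ((w1 - w2 + w3 + w4 : LinearMap.ker E.p) : Lt) + s (S.tr a b c) := by
      rw [hx, hy, hz, htrexp]
      push_cast [hw1, hw2, hw3, hw4]
      rfl
    have hlψ : ∀ d : L, l d ∈ LinearMap.ker E.p := fun d => LinearMap.mem_ker.mpr (hl d)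
    set u' : LinearMap.ker E.p := φ u + ⟨l (ψ a), hlψ _⟩ with hu'
    set v' : LinearMap.ker E.p := φ v + ⟨l (ψ b), hlψ _⟩ with hv'
    set w' : LinearMap.ker E.p := φ w + ⟨l (ψ c), hlψ _⟩ with hw'
    have hγx : γ x = (u' : Lt) + s (ψ a) := by rw [hx, hγ]; rfl
    have hγy : γ y = (v' : Lt) + s (ψ b) := by rw [hy, hγ]; rfl
    have hγz : γ z = (w' : Lt) + s (ψ c) := by rw [hz, hγ]; rfl
    have e1 : (φ w1 : Lt) = St.tr (φ u : Lt) (s (ψ b)) (s (ψ c)) := hcomp₃ b c u w1 rfl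
    have e2 : (φ w2 : Lt) = St.tr (φ v : Lt) (s (ψ a)) (s (ψ c)) := hcomp₃ a c v w2 rfl
    have e3 : (φ w3 : Lt) = St.tr (s (ψ a)) (s (ψ b)) (φ w : Lt) := hcomp₂ a b w w3 rfl
    have hw4' : (w4 : Lt) = β (ψ.symm (ψ a)) (ψ.symm (ψ b)) (ψ.symm (ψ c)) := by
      rw [ψ.symm_apply_apply, ψ.symm_apply_apply, ψ.symm_apply_apply]
    have e4 : (φ w4 : Lt)
        = (St.tr (l (ψ a)) (s (ψ b)) (s (ψ c)) - St.tr (l (ψ b)) (s (ψ a)) (s (ψ c))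
            + St.tr (s (ψ a)) (s (ψ b)) (l (ψ c)) - l (S.tr (ψ a) (ψ b) (ψ c)))
          + β (ψ a) (ψ b) (ψ c) :=
      sub_eq_iff_eq_add.mp (hcobII (ψ a) (ψ b) (ψ c) w4 hw4')
    have hφW : (φ (w1 - w2 + w3 + w4) : Lt)
        = (φ w1 : Lt) - (φ w2 : Lt) + (φ w3 : Lt) + (φ w4 : Lt) := by
      rw [map_add, map_add, map_sub]; push_cast; ring_nf
    have hcu : (u' : Lt) = (φ u : Lt) + l (ψ a) := rfl
    have hcv : (v' : Lt) = (φ v : Lt) + l (ψ b) := rfl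
    have hcw : (w' : Lt) = (φ w : Lt) + l (ψ c) := rfl
    rw [hW, hγ, hγx, hγy, hγz, htrexp u' v' w' (ψ a) (ψ b) (ψ c), hψtr, hφW,
      e1, e2, e3, e4, hcu, hcv, hcw]
    simp only [map_add, LinearMap.add_apply]
    abel
  · -- p v = 0 ↔ p (γ v) = 0
    intro x
    rw [hpγ]
    constructor
    · intro h; rw [h, map_zero]
    · intro h; exact ψ.injective (by simpa using h)
  · -- restriction to V is φ
    intro v
    have := hγ v 0
    simpa using this
  · -- induced map on L is ψ
    intro a
    rw [hpγ, hs]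
end

section
/- Let 0 → V → L̃ →p L → 0 be an abelian extension of Lie-Yamaguti algebras with section s. The map χ from Aut^{V,L}(L̃) := {γ ∈ Aut(L̃) : γ|_V = id_V and p∘γ∘s = id_L} to the space of derivations Der(L,V) := {λ: L → V linear : δ_I λ = 0 and δ_II λ = 0}, given by χ(γ)(a) := γ(s(a)) - s(a), is a group isomorphism (where Der(L,V) is a group under addition). -/
/-- The map `χ(γ)(a) := γ(s a) - s a` is a group isomorphism from
`Aut^{V,L}(L̃)` onto the additive group of derivations `Der(L,V)`. -/
theorem stmt14 {K Lt L : Type*} [Field K] [AddCommGroup Lt] [Module K Lt]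
    [AddCommGroup L] [Module K L] {St : LYStruct K Lt} {S : LYStruct K L}
    (E : AbExt St S) (s : L →ₗ[K] Lt) (hs : ∀ a, E.p (s a) = a)
    (AutVL : (Lt →ₗ[K] Lt) → Prop)
    (hAutVL : ∀ γ, AutVL γ ↔ IsLYAut St γ ∧ (∀ v, E.p v = 0 → γ v = v) ∧
      ∀ a, E.p (γ (s a)) = a)
    (Der : (L →ₗ[K] Lt) → Prop)
    (hDer : ∀ l, Der l ↔ (∀ a, E.p (l a) = 0) ∧
      (∀ a b, St.br (s a) (l b) - St.br (s b) (l a) - l (S.br a b) = 0) ∧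
      ∀ a b c, St.tr (l a) (s b) (s c) - St.tr (l b) (s a) (s c)
        + St.tr (s a) (s b) (l c) - l (S.tr a b c) = 0) :
    (∀ γ, AutVL γ → Der (γ ∘ₗ s - s)) ∧
    (∀ γ₁ γ₂, AutVL γ₁ → AutVL γ₂ →
      (γ₁ ∘ₗ γ₂) ∘ₗ s - s = (γ₁ ∘ₗ s - s) + (γ₂ ∘ₗ s - s)) ∧
    (∀ γ₁ γ₂, AutVL γ₁ → AutVL γ₂ → γ₁ ∘ₗ s - s = γ₂ ∘ₗ s - s → γ₁ = γ₂) ∧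
    (∀ l, Der l → ∃ γ, AutVL γ ∧ γ ∘ₗ s - s = l) := by
  -- Expansion lemmas for bilinear/trilinear maps
  have br_exp : ∀ x y z w : Lt, St.br (x + y) (z + w)
      = St.br x z + St.br x w + St.br y z + St.br y w := by
    intro x y z w
    simp only [map_add, LinearMap.add_apply]
    abel
  have tr_exp : ∀ x u y v z w : Lt, St.tr (x + u) (y + v) (z + w)
      = St.tr x y z + St.tr x y w + St.tr x v z + St.tr x v w
        + St.tr u y z + St.tr u y w + St.tr u v z + St.tr u v w := by
    intro x u y v z w
    simp only [map_add, LinearMap.add_apply]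
    abel
  -- Key structural identity: γ = id + λ ∘ p  for γ ∈ Aut^{V,L}
  have key : ∀ γ, AutVL γ → ∀ x : Lt, γ x = x + (γ (s (E.p x)) - s (E.p x)) := by
    intro γ hγ x
    obtain ⟨_, hV, _⟩ := (hAutVL γ).1 hγ
    have h1 : E.p (x - s (E.p x)) = 0 := by simp [hs]
    have h2 : γ (x - s (E.p x)) = x - s (E.p x) := hV _ h1
    have h3 : γ x = γ (s (E.p x)) + (x - s (E.p x)) := by
      rw [← h2, ← map_add]; congr 1; abel
    rw [h3]; abel
  -- χ maps into Der
  have part1 : ∀ γ, AutVL γ → Der (γ ∘ₗ s - s) := by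
    intro γ hγ
    obtain ⟨⟨hbij, hbr, htr⟩, hV, hp⟩ := (hAutVL γ).1 hγ
    have hla : ∀ a, (γ ∘ₗ s - s) a = γ (s a) - s a := by
      intro a; simp [LinearMap.sub_apply]
    have hpl : ∀ a, E.p ((γ ∘ₗ s - s) a) = 0 := by
      intro a; rw [hla]; simp [hs, hp]
    rw [hDer]
    refine ⟨hpl, ?_, ?_⟩
    · intro a b
      set l := γ ∘ₗ s - s with hl
      have hsa : γ (s a) = s a + l a := by rw [hla]; abel
      have hsb : γ (s b) = s b + l b := by rw [hla]; abel
      have e1 : γ (St.br (s a) (s b)) = St.br (s a) (s b) + l (S.br a b) := by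
        rw [key γ hγ, E.map_br, hs, hs, hla]
      have e2 : γ (St.br (s a) (s b)) = St.br (s a + l a) (s b + l b) := by
        rw [hbr, hsa, hsb]
      have e3 : St.br (l a) (l b) = 0 := E.ab_br _ _ (hpl a) (hpl b)
      have e4 : St.br (l a) (s b) = - St.br (s b) (l a) := St.ly1 _ _
      rw [br_exp, e3, e4] at e2
      have := e1.symm.trans e2
      -- St.br (s a)(s b) + l (S.br a b) = St.br (s a)(s b) + St.br (s a)(l b) + (- St.br (s b)(l a)) + 0
      have h5 : l (S.br a b) = St.br (s a) (l b) - St.br (s b) (l a) :=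
        add_left_cancel (this.trans (by abel))
      rw [h5]; abel
    · intro a b c
      set l := γ ∘ₗ s - s with hl
      have hsx : ∀ x, γ (s x) = s x + l x := by intro x; rw [hla]; abel
      have e1 : γ (St.tr (s a) (s b) (s c))
          = St.tr (s a) (s b) (s c) + l (S.tr a b c) := by
        rw [key γ hγ, E.map_tr, hs, hs, hs, hla]
      have e2 : γ (St.tr (s a) (s b) (s c))
          = St.tr (s a + l a) (s b + l b) (s c + l c) := by
        rw [htr, hsx, hsx, hsx]
      have z1 : St.tr (s a) (l b) (l c) = 0 := E.ab_tr₃ _ _ _ (hpl b) (hpl c)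
      have z2 : St.tr (l a) (s b) (l c) = 0 := E.ab_tr₂ _ _ _ (hpl a) (hpl c)
      have z3 : St.tr (l a) (l b) (s c) = 0 := E.ab_tr₁ _ _ _ (hpl a) (hpl b)
      have z4 : St.tr (l a) (l b) (l c) = 0 := E.ab_tr₁ _ _ _ (hpl a) (hpl b)
      have e5 : St.tr (s a) (l b) (s c) = - St.tr (l b) (s a) (s c) := St.ly2 _ _ _
      rw [tr_exp, z1, z2, z3, z4, e5] at e2
      have := e1.symm.trans e2
      have h5 : l (S.tr a b c) = St.tr (l a) (s b) (s c) - St.tr (l b) (s a) (s c)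
          + St.tr (s a) (s b) (l c) :=
        add_left_cancel (this.trans (by abel))
      rw [h5]; abel
  refine ⟨part1, ?_, ?_, ?_⟩
  · -- χ(γ₁γ₂) = χ(γ₁) + χ(γ₂)
    intro γ₁ γ₂ h₁ h₂
    obtain ⟨_, _, hp₂⟩ := (hAutVL γ₂).1 h₂
    ext a
    simp only [LinearMap.sub_apply, LinearMap.add_apply, LinearMap.comp_apply]
    rw [key γ₁ h₁ (γ₂ (s a)), hp₂ a]
    abel
  · -- injectivity
    intro γ₁ γ₂ h₁ h₂ heq
    ext x
    rw [key γ₁ h₁ x, key γ₂ h₂ x]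
    have : (γ₁ ∘ₗ s - s) (E.p x) = (γ₂ ∘ₗ s - s) (E.p x) := by rw [heq]
    simpa [LinearMap.sub_apply] using this
  · -- surjectivity
    intro l hl
    obtain ⟨hpl, hco1, hco2⟩ := (hDer l).1 hl
    set γ : Lt →ₗ[K] Lt := LinearMap.id + l ∘ₗ E.p with hγdef
    have hγx : ∀ x, γ x = x + l (E.p x) := by intro x; simp [hγdef]
    have hginv : ∀ x : Lt, γ (x - l (E.p x)) = x := by
      intro x
      rw [hγx]
      simp only [map_sub, hpl (E.p x), sub_zero]
      abel
    have hinv2 : ∀ x : Lt, γ x - l (E.p (γ x)) = x := by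
      intro x
      rw [hγx]
      simp only [map_add, hpl (E.p x), add_zero]
      abel
    have hbij : Function.Bijective γ := by
      constructor
      · intro x y hxy
        have := congrArg (fun z => z - l (E.p z)) hxy
        rwa [hinv2, hinv2] at this
      · intro x; exact ⟨x - l (E.p x), hginv x⟩
    have hpγ : ∀ x, E.p (γ x) = E.p x := by
      intro x; rw [hγx]; simp [hpl]
    have hbr : ∀ x y, γ (St.br x y) = St.br (γ x) (γ y) := by
      intro x y
      have hx : x = s (E.p x) + (x - s (E.p x)) := by abel
      have hy : y = s (E.p y) + (y - s (E.p y)) := by abel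
      have hux : E.p (x - s (E.p x)) = 0 := by simp [hs]
      have huy : E.p (y - s (E.p y)) = 0 := by simp [hs]
      rw [hγx, hγx, hγx, E.map_br]
      rw [br_exp]
      have k1 : St.br x (l (E.p y)) = St.br (s (E.p x)) (l (E.p y)) := by
        conv_lhs => rw [hx]
        rw [map_add, LinearMap.add_apply, E.ab_br _ _ hux (hpl _), add_zero]
      have k2 : St.br (l (E.p x)) y = - St.br (s (E.p y)) (l (E.p x)) := by
        conv_lhs => rw [hy]
        rw [map_add, St.ly1 _ (s (E.p y)), E.ab_br _ _ (hpl _) huy]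
        abel
      have k3 : St.br (l (E.p x)) (l (E.p y)) = 0 := E.ab_br _ _ (hpl _) (hpl _)
      rw [k1, k2, k3]
      have := hco1 (E.p x) (E.p y)
      have h5 : l (S.br (E.p x) (E.p y))
          = St.br (s (E.p x)) (l (E.p y)) - St.br (s (E.p y)) (l (E.p x)) :=
        (eq_of_sub_eq_zero this).symm
      rw [h5]; abel
    have htr : ∀ x y z, γ (St.tr x y z) = St.tr (γ x) (γ y) (γ z) := by
      intro x y z
      have hux : E.p (x - s (E.p x)) = 0 := by simp [hs]
      have huy : E.p (y - s (E.p y)) = 0 := by simp [hs]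
      have huz : E.p (z - s (E.p z)) = 0 := by simp [hs]
      have hx : x = s (E.p x) + (x - s (E.p x)) := by abel
      have hy : y = s (E.p y) + (y - s (E.p y)) := by abel
      have hz : z = s (E.p z) + (z - s (E.p z)) := by abel
      rw [hγx, hγx, hγx, hγx, E.map_tr, tr_exp]
      -- single-l terms
      have k1 : St.tr x y (l (E.p z)) = St.tr (s (E.p x)) (s (E.p y)) (l (E.p z)) := by
        conv_lhs => rw [hx, hy]
        simp only [map_add, LinearMap.add_apply]
        rw [E.ab_tr₂ _ _ _ hux (hpl _), E.ab_tr₃ _ _ _ huy (hpl _),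
          E.ab_tr₃ _ _ _ huy (hpl _)]
        abel
      have k2 : St.tr x (l (E.p y)) z = - St.tr (l (E.p y)) (s (E.p x)) (s (E.p z)) := by
        conv_lhs => rw [hx, hz]
        simp only [map_add, LinearMap.add_apply]
        rw [E.ab_tr₃ _ _ _ (hpl _) huz, E.ab_tr₁ _ _ _ hux (hpl _),
          E.ab_tr₁ _ _ _ hux (hpl _), St.ly2 (s (E.p x))]
        abel
      have k3 : St.tr (l (E.p x)) y z = St.tr (l (E.p x)) (s (E.p y)) (s (E.p z)) := by
        conv_lhs => rw [hy, hz]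
        simp only [map_add, LinearMap.add_apply]
        rw [E.ab_tr₂ _ _ _ (hpl _) huz, E.ab_tr₁ _ _ _ (hpl _) huy,
          E.ab_tr₁ _ _ _ (hpl _) huy]
        abel
      have z1 : St.tr x (l (E.p y)) (l (E.p z)) = 0 := E.ab_tr₃ _ _ _ (hpl _) (hpl _)
      have z2 : St.tr (l (E.p x)) y (l (E.p z)) = 0 := E.ab_tr₂ _ _ _ (hpl _) (hpl _)
      have z3 : St.tr (l (E.p x)) (l (E.p y)) z = 0 := E.ab_tr₁ _ _ _ (hpl _) (hpl _)
      have z4 : St.tr (l (E.p x)) (l (E.p y)) (l (E.p z)) = 0 :=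
        E.ab_tr₁ _ _ _ (hpl _) (hpl _)
      rw [k1, k2, k3, z1, z2, z3, z4]
      have := hco2 (E.p x) (E.p y) (E.p z)
      have h5 : l (S.tr (E.p x) (E.p y) (E.p z))
          = St.tr (l (E.p x)) (s (E.p y)) (s (E.p z))
            - St.tr (l (E.p y)) (s (E.p x)) (s (E.p z))
            + St.tr (s (E.p x)) (s (E.p y)) (l (E.p z)) :=
        (eq_of_sub_eq_zero this).symm
      rw [h5]; abel
    refine ⟨γ, ?_, ?_⟩
    · rw [hAutVL]
      refine ⟨⟨hbij, hbr, htr⟩, ?_, ?_⟩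
      · intro v hv; rw [hγx, hv, map_zero, add_zero]
      · intro a; rw [hγx]; simp [hpl, hs]
    · ext a
      simp only [LinearMap.sub_apply, LinearMap.comp_apply]
      rw [hγx, hs]
      abel
end

section
/- Let 𝔥_n be the Heisenberg Lie-Yamaguti algebra with center Z(𝔥_n) = span{e} and quotient H̄_n = 𝔥_n/Z(𝔥_n) (an abelian Lie-Yamaguti algebra). Consider the abelian extension 0 → Z(𝔥_n) → 𝔥_n → H̄_n → 0 with section s(ē_i) = e_i. A pair (φ,ψ) ∈ Aut(Z(𝔥_n)) × Aut(H̄_n), where φ(e) = κe with κ ≠ 0 and ψ has block matrix [[A,B],[C,D]] with respect to the basis {ē_1,…,ē_n, ē_{n+1},…,ē_{2n}}, is inducible by an automorphism of 𝔥_n restricted to the binary bracket data only if AᵀD − CᵀB = κI and the matrices AᵀC and BᵀD are symmetric. -/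
open Matrix

/-- For the abelian extension `0 → Z(𝔥_n) → 𝔥_n → H̄_n → 0` of the Heisenberg
Lie-Yamaguti algebra, if the pair `(φ, ψ)` (with `φ = κ·id`, `κ ≠ 0`, and `ψ`
with block matrix `[[A,B],[C,D]]`) is induced by an automorphism `γ` of `𝔥_n`
preserving the binary bracket, then `AᵀD - CᵀB = κI` and `AᵀC`, `BᵀD` are
symmetric. -/
theorem stmt18 (K : Type*) [Field K] [CharZero K] (n : ℕ) (hn : 1 ≤ n)
    (A B C D : Matrix (Fin n) (Fin n) K) (κ : K) (hκ : κ ≠ 0)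
    (Br : (K × (Fin n → K) × (Fin n → K)) →ₗ[K]
      (K × (Fin n → K) × (Fin n → K)) →ₗ[K] (K × (Fin n → K) × (Fin n → K)))
    (hBr : ∀ p q, Br p q
      = (∑ i, (p.2.1 i * q.2.2 i - p.2.2 i * q.2.1 i), 0, 0))
    (ψ : ((Fin n → K) × (Fin n → K)) → ((Fin n → K) × (Fin n → K)))
    (hψ : ∀ u, ψ u = (A.mulVec u.1 + B.mulVec u.2, C.mulVec u.1 + D.mulVec u.2))
    (hψbij : Function.Bijective ψ)
    (γ : (K × (Fin n → K) × (Fin n → K)) →ₗ[K] (K × (Fin n → K) × (Fin n → K)))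
    (hγbij : Function.Bijective γ)
    (hγbr : ∀ p q, γ (Br p q) = Br (γ p) (γ q))
    (hγZ : ∀ c : K, γ (c, 0, 0) = (κ * c, 0, 0))
    (hγψ : ∀ u : (Fin n → K) × (Fin n → K), (γ (0, u.1, u.2)).2 = ψ u) :
    Aᵀ * D - Cᵀ * B = κ • (1 : Matrix (Fin n) (Fin n) K) ∧
    (Aᵀ * C).IsSymm ∧ (Bᵀ * D).IsSymm := by
  -- key symplectic identity
  have key : ∀ u v : (Fin n → K) × (Fin n → K),
      (∑ i, ((ψ u).1 i * (ψ v).2 i - (ψ u).2 i * (ψ v).1 i))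
        = κ * ∑ i, (u.1 i * v.2 i - u.2 i * v.1 i) := by
    intro u v
    have h := hγbr (0, u.1, u.2) (0, v.1, v.2)
    rw [hBr, hBr] at h
    simp only [hγZ] at h
    rw [show ((γ (0, u.1, u.2)).2.1 : Fin n → K) = (ψ u).1 from
        congrArg Prod.fst (hγψ u),
      show ((γ (0, u.1, u.2)).2.2 : Fin n → K) = (ψ u).2 from
        congrArg Prod.snd (hγψ u),
      show ((γ (0, v.1, v.2)).2.1 : Fin n → K) = (ψ v).1 from
        congrArg Prod.fst (hγψ v),
      show ((γ (0, v.1, v.2)).2.2 : Fin n → K) = (ψ v).2 from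
        congrArg Prod.snd (hγψ v)] at h
    exact (congrArg Prod.fst h).symm
  refine ⟨?_, ?_, ?_⟩
  · ext i j
    have h := key (Pi.single i 1, 0) (0, Pi.single j 1)
    simp only [hψ, mulVec_single, mulVec_zero, add_zero, zero_add, Pi.zero_apply,
      mul_one, zero_mul, mul_zero, sub_zero, zero_sub] at h
    simpa [Matrix.mul_apply, Matrix.smul_apply, Matrix.one_apply, Finset.mul_sum,
      mul_comm, Pi.single_apply, Finset.sum_ite_eq', mul_sub, eq_comm] using h
  · rw [Matrix.IsSymm]
    ext i j
    have h := key (Pi.single j 1, 0) (Pi.single i 1, 0)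
    simp only [hψ, mulVec_single, mulVec_zero, add_zero, zero_add, Pi.zero_apply,
      mul_one, zero_mul, mul_zero, sub_zero, zero_sub, sub_self, Finset.sum_const_zero] at h
    have h' : ∑ k, A k j * C k i = ∑ k, C k j * A k i := by
      exact sub_eq_zero.mp (by simpa [Finset.sum_sub_distrib] using h)
    simpa [Matrix.mul_apply, Matrix.transpose_apply, mul_comm] using h'
  · rw [Matrix.IsSymm]
    ext i j
    have h := key (0, Pi.single j 1) (0, Pi.single i 1)
    simp only [hψ, mulVec_single, mulVec_zero, add_zero, zero_add, Pi.zero_apply,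
      mul_one, zero_mul, mul_zero, sub_zero, zero_sub, sub_self, Finset.sum_const_zero] at h
    have h' : ∑ k, B k j * D k i = ∑ k, D k j * B k i := by
      exact sub_eq_zero.mp (by simpa [Finset.sum_sub_distrib] using h)
    simpa [Matrix.mul_apply, Matrix.transpose_apply, mul_comm] using h'
end
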